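/- arXiv:1504.03668 — 4 statements merged into one kernel-verified Lean document; each statement's English description precedes it below -/
import Mathlib

section
/- Let r ≥ 3 and l ≥ 3 be integers and let H be an r-graph containing no r-uniform loose cycle of length l. Then there exists a hypergraph H' with V(H') = V(H), all of whose edges have size between 2 and r, such that H' contains no loose cycle of length l, α(H) ≥ α(H'), and E(H') is the union of at most (r choose 2) · r! · (rl−1)^r simple hypergraphs. -/
open Finset

section Defs

variable {α : Type*} [DecidableEq α]

/-- `e 0, …, e (l-1)` form a loose cycle of length `l`: distinct edges, each of size
at least 2, cyclically consecutive edges meet in exactly one vertex, all other pairs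
of edges are disjoint. -/
def IsLooseCycleOn (l : ℕ) (e : ℕ → Finset α) : Prop :=
  (∀ i < l, ∀ j < l, i ≠ j → e i ≠ e j) ∧
  (∀ i < l, 2 ≤ (e i).card) ∧
  (∀ i < l, (e i ∩ e ((i + 1) % l)).card = 1) ∧
  (∀ i < l, ∀ j < l, j ≠ i → j ≠ (i + 1) % l → i ≠ (j + 1) % l → e i ∩ e j = ∅)

/-- A hypergraph with edge set `E` contains a loose cycle of length `l`. -/
def ContainsLooseCycle (l : ℕ) (E : Set (Finset α)) : Prop :=
  ∃ e : ℕ → Finset α, IsLooseCycleOn l e ∧ ∀ i < l, e i ∈ E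

/-- A hypergraph with edge set `E` contains an `r`-uniform loose cycle of length `l`. -/
def ContainsUniformLooseCycle (r l : ℕ) (E : Set (Finset α)) : Prop :=
  ∃ e : ℕ → Finset α, IsLooseCycleOn l e ∧ (∀ i < l, (e i).card = r) ∧ ∀ i < l, e i ∈ E

/-- `f 0, …, f (k-1)` form a simple path of length `k`: each edge has size at least 2,
consecutive edges meet, non-consecutive edges are disjoint, and any two distinct
edges meet in at most one vertex. -/
def IsSimplePathOn (k : ℕ) (f : ℕ → Finset α) : Prop :=
  (∀ i < k, 2 ≤ (f i).card) ∧
  (∀ i, i + 1 < k → (f i ∩ f (i + 1)).Nonempty) ∧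
  (∀ i < k, ∀ j < k, i < j → j ≠ i + 1 → f i ∩ f j = ∅) ∧
  (∀ i < k, ∀ j < k, i ≠ j → (f i ∩ f j).card ≤ 1)

/-- The simple path `f 0, …, f (k-1)` joins `a` to `b`. -/
def SimplePathJoins (k : ℕ) (f : ℕ → Finset α) (a b : α) : Prop :=
  IsSimplePathOn k f ∧ a ∈ f 0 ∧ b ∈ f (k - 1) ∧
  (2 ≤ k → a ∉ f 1 ∧ b ∉ f (k - 2))

/-- `p` is a heavy pair of the 3-graph `H` (with respect to the parameter `l`):
it is a pair of vertices contained in at least `2l-2` edges of `H`. -/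
def PairHeavy (l : ℕ) (H : Finset (Finset α)) (p : Finset α) : Prop :=
  p.card = 2 ∧ 2 * l - 2 ≤ (H.filter fun e => p ⊆ e).card

/-- `e` is a light edge of the 3-graph `H`: an edge of `H` containing no heavy pair. -/
def EdgeLight (l : ℕ) (H : Finset (Finset α)) (e : Finset α) : Prop :=
  e ∈ H ∧ ∀ p ⊆ e, ¬ PairHeavy l H p

/-- The reduced hypergraph `H*` of a 3-graph `H`: its edges are the light edges of `H`
together with the heavy pairs of `H`. -/
def Reduced (l : ℕ) (H : Finset (Finset α)) : Set (Finset α) :=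
  {e | EdgeLight l H e ∨ PairHeavy l H e}

/-- `(X, Y)` is an extender in the 3-graph `H`. -/
def IsExtender (l : ℕ) (H : Finset (Finset α)) (X Y : Finset α) : Prop :=
  Disjoint X Y ∧ Y.card ≤ 2 * X.card ∧
  ∀ u ∈ X, ∀ v ∈ X, u ≠ v → ∀ S : Finset α,
    Disjoint S ({u, v} ∪ Y) → S.card ≤ 2 * l - 5 →
      ∃ f : ℕ → Finset α, SimplePathJoins 2 f u v ∧ (∀ i < 2, f i ∈ H) ∧
        ∀ i < 2, Disjoint (f i) S

/-- `X` is an independent set of the hypergraph with edge set `E`. -/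
def IndepIn (E : Set (Finset α)) (X : Finset α) : Prop := ∀ e ∈ E, ¬ e ⊆ X

end Defs

/-- The independence number of a hypergraph on a finite vertex type. -/
noncomputable def hyperAlpha {α : Type*} [DecidableEq α] [Fintype α]
    (H : Finset (Finset α)) : ℕ :=
  sSup {k | ∃ X : Finset α, IndepIn (↑H : Set (Finset α)) X ∧ X.card = k}

section MyAux
variable {α : Type*} [DecidableEq α]

/-- `W` is a cover of the link of `S` in `H`. -/
def MyIsCover (H : Finset (Finset α)) (S W : Finset α) : Prop :=
  ∀ e ∈ H, S ⊆ e → ((e \ S) ∩ W).Nonempty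

/-- `S` is heavy. -/
def MyHeavy (H : Finset (Finset α)) (c : ℕ) (S : Finset α) : Prop :=
  2 ≤ S.card ∧ (S ∈ H ∨ ∀ W : Finset α, W.card ≤ c → ¬ MyIsCover H S W)

lemma myHeavy_subset_edge {H : Finset (Finset α)} {c : ℕ} {S : Finset α}
    (h : MyHeavy H c S) : ∃ e ∈ H, S ⊆ e := by
  rcases h.2 with he | hnc
  · exact ⟨S, he, subset_rfl⟩
  · have h0 := hnc ∅ (Nat.zero_le c)
    unfold MyIsCover at h0
    push_neg at h0
    obtain ⟨e, he, hSe, _⟩ := h0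
    exact ⟨e, he, hSe⟩

lemma myHeavy_ext {H : Finset (Finset α)} {c : ℕ} {S : Finset α}
    (h : MyHeavy H c S) (F : Finset α) (hF : F.card ≤ c) :
    ∃ e ∈ H, S ⊆ e ∧ (e \ S) ∩ F = ∅ := by
  rcases h.2 with he | hnc
  · exact ⟨S, he, subset_rfl, by simp⟩
  · have h0 := hnc F hF
    unfold MyIsCover at h0
    push_neg at h0
    obtain ⟨e, he, hSe, hne⟩ := h0
    exact ⟨e, he, hSe, hne⟩

lemma myExists_minHeavy {H : Finset (Finset α)} {c : ℕ} :
    ∀ S : Finset α, MyHeavy H c S →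
      ∃ T ⊆ S, MyHeavy H c T ∧ ∀ Q ⊂ T, ¬ MyHeavy H c Q := by
  intro S
  induction S using Finset.strongInductionOn with
  | _ S ih =>
    intro hS
    by_cases hmin : ∀ Q ⊂ S, ¬ MyHeavy H c Q
    · exact ⟨S, subset_rfl, hS, hmin⟩
    · push_neg at hmin
      obtain ⟨Q, hQS, hQ⟩ := hmin
      obtain ⟨T, hTQ, hT⟩ := ih Q hQS hQ
      exact ⟨T, hTQ.trans hQS.subset, hT⟩

/-- The key branching claim: if `T` is heavy, `Q ⊊ T`, and `W` is a small cover of the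
link of `Q`, then `W` meets `T \ Q`. -/
lemma myClaim_x {H : Finset (Finset α)} {c : ℕ} {T Q W : Finset α}
    (hT : MyHeavy H c T) (hQT : Q ⊂ T) (hW : MyIsCover H Q W) (hWc : W.card ≤ c) :
    ∃ x ∈ W, x ∈ T \ Q := by
  by_contra hx
  push_neg at hx
  have hdisj : (T \ Q) ∩ W = ∅ := by
    rw [Finset.eq_empty_iff_forall_notMem]
    intro v hv
    rw [Finset.mem_inter] at hv
    exact hx v hv.2 hv.1
  rcases hT.2 with he | hnc
  · obtain ⟨w, hw⟩ := hW T he hQT.subset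
    rw [Finset.eq_empty_iff_forall_notMem] at hdisj
    exact hdisj w (by rw [Finset.mem_inter] at hw ⊢; exact hw)
  · apply hnc W hWc
    intro e he hTe
    obtain ⟨w, hw⟩ := hW e he (hQT.subset.trans hTe)
    rw [Finset.mem_inter, Finset.mem_sdiff] at hw
    refine ⟨w, ?_⟩
    rw [Finset.mem_inter, Finset.mem_sdiff]
    refine ⟨⟨hw.1.1, fun hwT => ?_⟩, hw.2⟩
    rw [Finset.eq_empty_iff_forall_notMem] at hdisj
    exact hdisj w (by rw [Finset.mem_inter, Finset.mem_sdiff]; exact ⟨⟨hwT, hw.1.2⟩, hw.2⟩)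

/-- branching bound function -/
def myB (c : ℕ) : ℕ → ℕ
  | 0 => 0
  | k + 1 => c * (1 + myB c k)

lemma myB_le (c : ℕ) (hc : 1 ≤ c) : ∀ k, myB c k ≤ k * c ^ k := by
  intro k
  induction k with
  | zero => simp [myB]
  | succ k ih =>
    have h1 : c ≤ c ^ (k+1) := by
      calc c = c ^ 1 := (pow_one c).symm
      _ ≤ c ^ (k+1) := Nat.pow_le_pow_right hc (by omega)
    calc myB c (k+1) = c + c * myB c k := by rw [myB]; ring
    _ ≤ c + c * (k * c ^ k) := by
        exact Nat.add_le_add_left (Nat.mul_le_mul_left c ih) c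
    _ = c + k * c ^ (k+1) := by ring
    _ ≤ c ^ (k+1) + k * c ^ (k+1) := Nat.add_le_add_right h1 _
    _ = (k+1) * c ^ (k+1) := by ring

lemma myCount {H : Finset (Finset α)} {c r : ℕ} {H' : Finset (Finset α)}
    (hH' : ∀ T ∈ H', MyHeavy H c T ∧ ∀ Q ⊂ T, ¬ MyHeavy H c Q)
    (hsz : ∀ T ∈ H', T.card ≤ r) :
    ∀ k, ∀ Q : Finset α, 2 ≤ Q.card → ¬ MyHeavy H c Q → r ≤ Q.card + k →
      (H'.filter (fun T => Q ⊂ T)).card ≤ myB c k := by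
  intro k
  induction k with
  | zero =>
    intro Q h2 hQ hrk
    have : H'.filter (fun T => Q ⊂ T) = ∅ := by
      rw [Finset.eq_empty_iff_forall_notMem]
      intro T hT
      rw [Finset.mem_filter] at hT
      have h1 : T.card ≤ r := hsz T hT.1
      have h2 : Q.card < T.card := Finset.card_lt_card hT.2
      omega
    rw [this]; simp [myB]
  | succ k ih =>
    intro Q h2 hQ hrk
    classical
    -- extract a cover
    have hcov : ∃ W : Finset α, W.card ≤ c ∧ MyIsCover H Q W := by
      by_contra hc'
      push_neg at hc'
      exact hQ ⟨h2, Or.inr fun W hW => hc' W hW⟩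
    obtain ⟨W, hWc, hW⟩ := hcov
    have hsub : H'.filter (fun T => Q ⊂ T) ⊆
        (W \ Q).biUnion (fun x =>
          insert (insert x Q) (H'.filter (fun T => insert x Q ⊂ T))) := by
      intro T hT
      rw [Finset.mem_filter] at hT
      obtain ⟨x, hxW, hxT⟩ := myClaim_x (hH' T hT.1).1 hT.2 hW hWc
      rw [Finset.mem_sdiff] at hxT
      rw [Finset.mem_biUnion]
      refine ⟨x, Finset.mem_sdiff.mpr ⟨hxW, hxT.2⟩, ?_⟩
      have hins : insert x Q ⊆ T := Finset.insert_subset hxT.1 hT.2.subset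
      rcases eq_or_ne (insert x Q) T with h | h
      · rw [Finset.mem_insert]; exact Or.inl h.symm
      · rw [Finset.mem_insert]
        exact Or.inr (Finset.mem_filter.mpr ⟨hT.1, Finset.ssubset_iff_subset_ne.mpr ⟨hins, h⟩⟩)
    calc (H'.filter (fun T => Q ⊂ T)).card
        ≤ ((W \ Q).biUnion (fun x =>
          insert (insert x Q) (H'.filter (fun T => insert x Q ⊂ T)))).card :=
          Finset.card_le_card hsub
      _ ≤ ∑ x ∈ W \ Q,
          (insert (insert x Q) (H'.filter (fun T => insert x Q ⊂ T))).card :=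
          Finset.card_biUnion_le
      _ ≤ ∑ _x ∈ W \ Q, (1 + myB c k) := by
          apply Finset.sum_le_sum
          intro x hx
          rw [Finset.mem_sdiff] at hx
          have hcard : (H'.filter (fun T => insert x Q ⊂ T)).card ≤ myB c k := by
            by_cases hh : MyHeavy H c (insert x Q)
            · have : H'.filter (fun T => insert x Q ⊂ T) = ∅ := by
                rw [Finset.eq_empty_iff_forall_notMem]
                intro T hT
                rw [Finset.mem_filter] at hT
                exact (hH' T hT.1).2 _ hT.2 hh
              rw [this]; simp
            · apply ih (insert x Q) ?_ hh ?_
              · have := Finset.card_insert_of_notMem hx.2; omega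
              · have := Finset.card_insert_of_notMem hx.2; omega
          calc (insert (insert x Q) (H'.filter (fun T => insert x Q ⊂ T))).card
              ≤ (H'.filter (fun T => insert x Q ⊂ T)).card + 1 := Finset.card_insert_le _ _
            _ ≤ 1 + myB c k := by omega
      _ = (W \ Q).card * (1 + myB c k) := by
          rw [Finset.sum_const, smul_eq_mul]
      _ ≤ c * (1 + myB c k) := by
          apply Nat.mul_le_mul_right
          calc (W \ Q).card ≤ W.card := Finset.card_le_card (Finset.sdiff_subset)
            _ ≤ c := hWc
      _ = myB c (k+1) := rfl


lemma myColoring (N : ℕ) (hN : 0 < N) (G : Finset (Finset α))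
    (hdeg : ∀ S ∈ G, (G.filter (fun T => T ≠ S ∧ 2 ≤ (S ∩ T).card)).card < N) :
    ∃ col : Finset α → Fin N,
      ∀ S ∈ G, ∀ T ∈ G, S ≠ T → 2 ≤ (S ∩ T).card → col S ≠ col T := by
  classical
  induction G using Finset.strongInductionOn with
  | _ G ih =>
    rcases G.eq_empty_or_nonempty with rfl | ⟨S, hS⟩
    · exact ⟨fun _ => ⟨0, hN⟩, by simp⟩
    · have hsub : G.erase S ⊂ G := Finset.erase_ssubset hS
      have hdeg' : ∀ S' ∈ G.erase S,
          ((G.erase S).filter (fun T => T ≠ S' ∧ 2 ≤ (S' ∩ T).card)).card < N := by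
        intro S' hS'
        calc ((G.erase S).filter (fun T => T ≠ S' ∧ 2 ≤ (S' ∩ T).card)).card
            ≤ (G.filter (fun T => T ≠ S' ∧ 2 ≤ (S' ∩ T).card)).card :=
              Finset.card_le_card (Finset.filter_subset_filter _ hsub.subset)
          _ < N := hdeg S' (hsub.subset hS')
      obtain ⟨col', hcol'⟩ := ih (G.erase S) hsub hdeg'
      set C := G.filter (fun T => T ≠ S ∧ 2 ≤ (S ∩ T).card) with hC
      have himg : (C.image col').card < N := by
        calc (C.image col').card ≤ C.card := Finset.card_image_le
          _ < N := hdeg S hS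
      have hex : ∃ i : Fin N, i ∉ C.image col' := by
        by_contra h
        push_neg at h
        have : (Finset.univ : Finset (Fin N)) ⊆ C.image col' := fun i _ => h i
        have := Finset.card_le_card this
        simp at this
        omega
      obtain ⟨i, hi⟩ := hex
      refine ⟨Function.update col' S i, ?_⟩
      intro S1 hS1 T1 hT1 hne hcard
      rcases eq_or_ne S1 S with rfl | hS1S
      · have hT1S : T1 ≠ S1 := hne.symm
        rw [Function.update_self, Function.update_of_ne hT1S]
        intro h
        exact hi (Finset.mem_image.mpr ⟨T1, Finset.mem_filter.mpr ⟨hT1, hT1S, hcard⟩, h.symm⟩)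
      · rcases eq_or_ne T1 S with rfl | hT1S
        · rw [Function.update_self, Function.update_of_ne hS1S]
          intro h
          refine hi (Finset.mem_image.mpr ⟨S1, Finset.mem_filter.mpr ⟨hS1, hS1S, ?_⟩, h⟩)
          rwa [Finset.inter_comm]
        · rw [Function.update_of_ne hS1S, Function.update_of_ne hT1S]
          exact hcol' S1 (Finset.mem_erase.mpr ⟨hS1S, hS1⟩) T1
            (Finset.mem_erase.mpr ⟨hT1S, hT1⟩) hne hcard


lemma myLift (r l : ℕ) (hr : 3 ≤ r) (hl : 3 ≤ l)
    (H : Finset (Finset α)) (hH : ∀ e ∈ H, e.card = r)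
    (E' : Set (Finset α)) (hsz : ∀ S ∈ E', S.card ≤ r)
    (hext : ∀ S ∈ E', ∀ F : Finset α, F.card ≤ r * (l - 1) →
      ∃ e ∈ H, S ⊆ e ∧ (e \ S) ∩ F = ∅)
    (hcyc : ContainsLooseCycle l E') :
    ContainsUniformLooseCycle r l (↑H : Set (Finset α)) := by
  classical
  obtain ⟨f, ⟨hdist, hcard2, hcons, hdisj⟩, hfm⟩ := hcyc
  -- pairwise intersection of the f's is small
  have interF : ∀ i < l, ∀ j < l, i ≠ j → (f i ∩ f j).card ≤ 1 := by
    intro i hi j hj hij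
    by_cases h1 : j = (i + 1) % l
    · subst h1; rw [hcons i hi]
    · by_cases h2 : i = (j + 1) % l
      · rw [Finset.inter_comm]
        have := hcons j hj
        rw [← h2] at this
        rw [this]
      · rw [hdisj i hi j hj (Ne.symm hij) h1 h2]
        simp
  -- construct the lifted edges
  have claim : ∀ k, k ≤ l → ∃ g : ℕ → Finset α, ∀ i < k,
      g i ∈ H ∧ f i ⊆ g i ∧ (∀ j < l, j ≠ i → Disjoint (g i \ f i) (f j)) ∧
      (∀ j < i, Disjoint (g i \ f i) (g j \ f j)) := by
    intro k
    induction k with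
    | zero => exact fun _ => ⟨fun _ => ∅, fun i hi => absurd hi (by omega)⟩
    | succ k ih =>
      intro hkl
      obtain ⟨g, hg⟩ := ih (by omega)
      have hk : k < l := by omega
      set F : Finset α :=
        (((Finset.range k).biUnion (fun j => g j)) ∪ ((Finset.range l).biUnion f)) \ f k
        with hFdef
      have hFsub : F ⊆ ((Finset.range k).biUnion (fun j => g j)) ∪
          ((Finset.Ico (k+1) l).biUnion f) := by
        intro v hv
        rw [hFdef, Finset.mem_sdiff, Finset.mem_union] at hv
        obtain ⟨hv1 | hv1, hv2⟩ := hv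
        · exact Finset.mem_union_left _ hv1
        · rw [Finset.mem_biUnion] at hv1
          obtain ⟨j, hj, hvj⟩ := hv1
          rw [Finset.mem_range] at hj
          rcases lt_trichotomy j k with h | h | h
          · exact Finset.mem_union_left _ (Finset.mem_biUnion.mpr
              ⟨j, Finset.mem_range.mpr h, (hg j h).2.1 hvj⟩)
          · exact absurd (h ▸ hvj) hv2
          · exact Finset.mem_union_right _ (Finset.mem_biUnion.mpr
              ⟨j, Finset.mem_Ico.mpr ⟨by omega, hj⟩, hvj⟩)
      have hsum1 : ∑ j ∈ Finset.range k, (g j).card ≤ k * r := by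
        have h := Finset.sum_le_card_nsmul (Finset.range k) (fun j => (g j).card) r
          (fun j hj => le_of_eq (hH _ (hg j (Finset.mem_range.mp hj)).1))
        simpa [smul_eq_mul] using h
      have hsum2 : ∑ j ∈ Finset.Ico (k+1) l, (f j).card ≤ (l - (k+1)) * r := by
        have h := Finset.sum_le_card_nsmul (Finset.Ico (k+1) l) (fun j => (f j).card) r
          (fun j hj => hsz _ (hfm j (Finset.mem_Ico.mp hj).2))
        simpa [smul_eq_mul, Nat.card_Ico] using h
      have harith : k * r + (l - (k+1)) * r ≤ r * (l - 1) := by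
        have h1 : k + (l - (k+1)) = l - 1 := by omega
        exact le_of_eq (by rw [← add_mul, h1, mul_comm])
      have hFcard : F.card ≤ r * (l - 1) := by
        calc F.card ≤ (((Finset.range k).biUnion (fun j => g j)) ∪
            ((Finset.Ico (k+1) l).biUnion f)).card := Finset.card_le_card hFsub
          _ ≤ ((Finset.range k).biUnion (fun j => g j)).card +
              ((Finset.Ico (k+1) l).biUnion f).card := Finset.card_union_le _ _
          _ ≤ (∑ j ∈ Finset.range k, (g j).card) +
              (∑ j ∈ Finset.Ico (k+1) l, (f j).card) :=
              Nat.add_le_add Finset.card_biUnion_le Finset.card_biUnion_le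
          _ ≤ k * r + (l - (k+1)) * r := Nat.add_le_add hsum1 hsum2
          _ ≤ r * (l - 1) := harith
      obtain ⟨e, heH, hfe, hdisjF⟩ := hext (f k) (hfm k hk) F hFcard
      refine ⟨Function.update g k e, fun i hi => ?_⟩
      have hfree_mem : ∀ v, v ∈ e \ f k → v ∉ F := by
        intro v hv hvF
        have : v ∈ (e \ f k) ∩ F := Finset.mem_inter.mpr ⟨hv, hvF⟩
        rw [hdisjF] at this
        exact absurd this (Finset.notMem_empty v)
      rcases Nat.lt_or_ge i k with hik | hik
      · -- old index: everything is unchanged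
        have hne : i ≠ k := by omega
        obtain ⟨h1, h2, h3, h4⟩ := hg i hik
        rw [Function.update_of_ne hne]
        refine ⟨h1, h2, h3, fun j hj => ?_⟩
        rw [Function.update_of_ne (show j ≠ k by omega)]
        exact h4 j hj
      · -- new index i = k
        have hik' : i = k := by omega
        subst hik'
        rw [Function.update_self]
        refine ⟨heH, hfe, ?_, ?_⟩
        · intro j hj hji
          rw [Finset.disjoint_left]
          intro v hv hvj
          apply hfree_mem v hv
          rw [hFdef, Finset.mem_sdiff]
          refine ⟨Finset.mem_union_right _ (Finset.mem_biUnion.mpr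
            ⟨j, Finset.mem_range.mpr hj, hvj⟩), (Finset.mem_sdiff.mp hv).2⟩
        · intro j hj
          rw [Function.update_of_ne (show j ≠ i by omega)]
          rw [Finset.disjoint_left]
          intro v hv hvj
          apply hfree_mem v hv
          rw [hFdef, Finset.mem_sdiff]
          rw [Finset.mem_sdiff] at hvj
          refine ⟨Finset.mem_union_left _ (Finset.mem_biUnion.mpr
            ⟨j, Finset.mem_range.mpr hj, hvj.1⟩), (Finset.mem_sdiff.mp hv).2⟩
  obtain ⟨g, hg⟩ := claim l le_rfl
  -- intersections agree
  have ginter : ∀ i < l, ∀ j < l, i ≠ j → g i ∩ g j = f i ∩ f j := by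
    intro i hi j hj hij
    apply Finset.Subset.antisymm
    · intro v hv
      rw [Finset.mem_inter] at hv
      obtain ⟨hvi, hvj⟩ := hv
      by_cases hfi : v ∈ f i
      · by_cases hfj : v ∈ f j
        · exact Finset.mem_inter.mpr ⟨hfi, hfj⟩
        · have hvj' : v ∈ g j \ f j := Finset.mem_sdiff.mpr ⟨hvj, hfj⟩
          exact absurd hfi (Finset.disjoint_left.mp ((hg j hj).2.2.1 i hi hij) hvj')
      · have hvi' : v ∈ g i \ f i := Finset.mem_sdiff.mpr ⟨hvi, hfi⟩
        by_cases hfj : v ∈ f j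
        · exact absurd hfj (Finset.disjoint_left.mp ((hg i hi).2.2.1 j hj (Ne.symm hij)) hvi')
        · have hvj' : v ∈ g j \ f j := Finset.mem_sdiff.mpr ⟨hvj, hfj⟩
          rcases Nat.lt_or_ge j i with h | h
          · exact absurd hvi' (Finset.disjoint_right.mp ((hg i hi).2.2.2 j h) hvj')
          · have h' : i < j := by omega
            exact absurd hvj' (Finset.disjoint_right.mp ((hg j hj).2.2.2 i h') hvi')
    · exact Finset.inter_subset_inter (hg i hi).2.1 (hg j hj).2.1
  have gcard : ∀ i < l, (g i).card = r := fun i hi => hH _ (hg i hi).1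
  have hmod : ∀ i < l, (i + 1) % l < l ∧ i ≠ (i + 1) % l := by
    intro i hi
    constructor
    · exact Nat.mod_lt _ (by omega)
    · rcases Nat.lt_or_ge (i + 1) l with h | h
      · rw [Nat.mod_eq_of_lt h]; omega
      · have : i + 1 = l := by omega
        rw [this, Nat.mod_self]; omega
  refine ⟨g, ⟨?_, ?_, ?_, ?_⟩, gcard, fun i hi => (hg i hi).1⟩
  · intro i hi j hj hij heq
    have h1 : (g i ∩ g j).card ≤ 1 := by
      rw [ginter i hi j hj hij]; exact interF i hi j hj hij
    rw [heq, Finset.inter_self, gcard j hj] at h1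
    omega
  · intro i hi
    rw [gcard i hi]; omega
  · intro i hi
    obtain ⟨hj, hij⟩ := hmod i hi
    rw [ginter i hi _ hj hij]
    exact hcons i hi
  · intro i hi j hj hji hj1 hi1
    rw [ginter i hi j hj (Ne.symm hji)]
    exact hdisj i hi j hj hji hj1 hi1


end MyAux


/-- Every `C_l^r`-free `r`-graph `H` admits a `C_l`-free `[2,r]`-graph `H'` on the
same vertex set with `α(H) ≥ α(H')` whose edge set is the union of at most
`(r choose 2) * r! * (rl - 1)^r` simple hypergraphs. -/
theorem reduction_to_simple {α : Type*} [DecidableEq α] [Fintype α] (r l : ℕ)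
    (hr : 3 ≤ r) (hl : 3 ≤ l)
    (H : Finset (Finset α)) (hH : ∀ e ∈ H, e.card = r)
    (hfree : ¬ ContainsUniformLooseCycle r l (↑H : Set (Finset α))) :
    ∃ H' : Finset (Finset α),
      (∀ e ∈ H', 2 ≤ e.card ∧ e.card ≤ r) ∧
      ¬ ContainsLooseCycle l (↑H' : Set (Finset α)) ∧
      hyperAlpha H' ≤ hyperAlpha H ∧
      ∃ Hs : Fin (Nat.choose r 2 * Nat.factorial r * (r * l - 1) ^ r) →
          Finset (Finset α),
        (∀ e, e ∈ H' ↔ ∃ i, e ∈ Hs i) ∧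
        ∀ i, ∀ e ∈ Hs i, ∀ f ∈ Hs i, e ≠ f → (e ∩ f).card ≤ 1 := by
  classical
  set c := r * (l - 1) with hc
  have hrl3 : r * 3 ≤ r * l := Nat.mul_le_mul_left r hl
  have hc1 : 1 ≤ c := by
    have h2 : 2 ≤ l - 1 := by omega
    calc 1 ≤ 3 * 2 := by omega
      _ ≤ r * (l - 1) := Nat.mul_le_mul hr h2
  set H' : Finset (Finset α) :=
    Finset.univ.filter (fun S => MyHeavy H c S ∧ ∀ Q ⊂ S, ¬ MyHeavy H c Q) with hH'def
  have hmem : ∀ S, S ∈ H' ↔ (MyHeavy H c S ∧ ∀ Q ⊂ S, ¬ MyHeavy H c Q) := by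
    intro S
    simp [hH'def]
  have hH'min : ∀ T ∈ H', MyHeavy H c T ∧ ∀ Q ⊂ T, ¬ MyHeavy H c Q :=
    fun T hT => (hmem T).mp hT
  have hsizes : ∀ S ∈ H', 2 ≤ S.card ∧ S.card ≤ r := by
    intro S hS
    have h := (hmem S).mp hS
    obtain ⟨e, heH, hse⟩ := myHeavy_subset_edge h.1
    exact ⟨h.1.1, le_trans (Finset.card_le_card hse) (le_of_eq (hH e heH))⟩
  have hsz' : ∀ T ∈ H', T.card ≤ r := fun T hT => (hsizes T hT).2
  refine ⟨H', hsizes, ?_, ?_, ?_⟩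
  · -- no loose cycle
    intro hcyc
    apply hfree
    apply myLift r l hr hl H hH (↑H' : Set (Finset α)) ?_ ?_ hcyc
    · intro S hS
      exact hsz' S (Finset.mem_coe.mp hS)
    · intro S hS F hF
      exact myHeavy_ext (hH'min S (Finset.mem_coe.mp hS)).1 F hF
  · -- independence number
    apply csSup_le_csSup
    · refine ⟨Fintype.card α, ?_⟩
      rintro k ⟨X, _, rfl⟩
      exact le_trans (Finset.card_le_univ X) (le_of_eq Finset.card_univ)
    · refine ⟨0, ∅, ?_, Finset.card_empty⟩
      intro e he hsub
      have h2 := (hsizes e (Finset.mem_coe.mp he)).1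
      have he0 : e = ∅ := Finset.subset_empty.mp hsub
      rw [he0] at h2
      simp at h2
    · rintro k ⟨X, hX, rfl⟩
      refine ⟨X, ?_, rfl⟩
      intro e heH hsub
      have hheavy : MyHeavy H c e := ⟨by rw [hH e (Finset.mem_coe.mp heH)]; omega,
        Or.inl (Finset.mem_coe.mp heH)⟩
      obtain ⟨T, hTe, hT1, hT2⟩ := myExists_minHeavy e hheavy
      exact hX T (Finset.mem_coe.mpr ((hmem T).mpr ⟨hT1, hT2⟩)) (hTe.trans hsub)
  · -- decomposition into simple hypergraphs
    set m := r * l - 1 with hm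
    set N := Nat.choose r 2 * Nat.factorial r * m ^ r with hN
    have hm8 : 8 ≤ m := by omega
    have hcle : c ≤ m := by
      have h0 : r * (l - 1) + r = r * l := by
        have hl1 : l - 1 + 1 = l := by omega
        calc r * (l - 1) + r = r * ((l - 1) + 1) := (Nat.mul_succ r (l - 1)).symm
          _ = r * l := by rw [hl1]
      omega
    have hNpos : 0 < N := by
      apply Nat.mul_pos
      apply Nat.mul_pos
      · exact Nat.choose_pos (by omega)
      · exact Nat.factorial_pos r
      · exact Nat.pow_pos (by omega)
    have hBbound : myB c (r - 2) < Nat.factorial r * m ^ r := by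
      have h1 : myB c (r - 2) ≤ (r - 2) * c ^ (r - 2) := myB_le c hc1 (r - 2)
      have h2 : c ^ (r - 2) ≤ m ^ (r - 2) := Nat.pow_le_pow_left hcle _
      have h3 : r - 2 < m ^ 2 := by
        have : m ≤ m ^ 2 := by
          calc m = m * 1 := (mul_one m).symm
            _ ≤ m * m := Nat.mul_le_mul_left m (by omega)
            _ = m ^ 2 := (sq m).symm
        omega
      have h4 : (r - 2) * c ^ (r - 2) < m ^ 2 * m ^ (r - 2) := by
        apply Nat.mul_lt_mul_of_lt_of_le h3 h2
        exact Nat.pow_pos (by omega)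
      have h5 : m ^ 2 * m ^ (r - 2) = m ^ r := by
        rw [← pow_add]
        congr 1
        omega
      have h6 : m ^ r ≤ Nat.factorial r * m ^ r :=
        Nat.le_mul_of_pos_left _ (Nat.factorial_pos r)
      omega
    have hdeg : ∀ S ∈ H', (H'.filter (fun T => T ≠ S ∧ 2 ≤ (S ∩ T).card)).card < N := by
      intro S hS
      have hsub : H'.filter (fun T => T ≠ S ∧ 2 ≤ (S ∩ T).card) ⊆
          (S.powersetCard 2).biUnion (fun q => H'.filter (fun T => q ⊂ T)) := by
        intro T hT
        rw [Finset.mem_filter] at hT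
        obtain ⟨hTH', hTS, hTcard⟩ := hT
        obtain ⟨q, hq, hqcard⟩ := Finset.exists_subset_card_eq hTcard
        rw [Finset.mem_biUnion]
        refine ⟨q, Finset.mem_powersetCard.mpr
          ⟨hq.trans Finset.inter_subset_left, hqcard⟩, ?_⟩
        rw [Finset.mem_filter]
        refine ⟨hTH', ?_⟩
        have hqT : q ⊆ T := hq.trans Finset.inter_subset_right
        rcases eq_or_ne q T with h | h
        · exfalso
          have hTsubS : T ⊂ S := by
            rw [← h] at hTS ⊢
            exact Finset.ssubset_iff_subset_ne.mpr ⟨hq.trans Finset.inter_subset_left, hTS⟩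
          exact ((hmem S).mp hS).2 T hTsubS ((hmem T).mp hTH').1
        · exact Finset.ssubset_iff_subset_ne.mpr ⟨hqT, h⟩
      have hbucket : ∀ q ∈ S.powersetCard 2,
          (H'.filter (fun T => q ⊂ T)).card ≤ myB c (r - 2) := by
        intro q hq
        rw [Finset.mem_powersetCard] at hq
        by_cases hh : MyHeavy H c q
        · have : H'.filter (fun T => q ⊂ T) = ∅ := by
            rw [Finset.eq_empty_iff_forall_notMem]
            intro T hT
            rw [Finset.mem_filter] at hT
            exact ((hmem T).mp hT.1).2 q hT.2 hh
          rw [this]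
          simp
        · exact myCount hH'min hsz' (r - 2) q (by omega) hh (by omega)
      calc (H'.filter (fun T => T ≠ S ∧ 2 ≤ (S ∩ T).card)).card
          ≤ ((S.powersetCard 2).biUnion (fun q => H'.filter (fun T => q ⊂ T))).card :=
            Finset.card_le_card hsub
        _ ≤ ∑ q ∈ S.powersetCard 2, (H'.filter (fun T => q ⊂ T)).card :=
            Finset.card_biUnion_le
        _ ≤ (S.powersetCard 2).card • myB c (r - 2) :=
            Finset.sum_le_card_nsmul _ _ _ hbucket
        _ = (S.card.choose 2) * myB c (r - 2) := by
            rw [Finset.card_powersetCard, smul_eq_mul]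
        _ ≤ (r.choose 2) * myB c (r - 2) :=
            Nat.mul_le_mul_right _ (Nat.choose_le_choose 2 (hsizes S hS).2)
        _ < (r.choose 2) * (Nat.factorial r * m ^ r) :=
            mul_lt_mul_of_pos_left hBbound (Nat.choose_pos (by omega))
        _ = N := by rw [hN, mul_assoc]
    obtain ⟨col, hcol⟩ := myColoring N hNpos H' hdeg
    refine ⟨fun i => H'.filter (fun e => col e = i), ?_, ?_⟩
    · intro e
      constructor
      · intro he
        exact ⟨col e, Finset.mem_filter.mpr ⟨he, rfl⟩⟩
      · rintro ⟨i, hi⟩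
        exact (Finset.mem_filter.mp hi).1
    · intro i e he f hf hef
      rw [Finset.mem_filter] at he hf
      by_contra hcard
      push_neg at hcard
      exact hcol e he.1 f hf.1 hef hcard (he.2.trans hf.2.symm)
end

section
/- Let k ≥ 1 be an integer and let H be a hypergraph all of whose edges have size at least 2. Then H is k-colourable if and only if there exists a total ordering < of V(H) such that H contains no increasing simple path of length k with respect to <. -/
open Finset

/-!
Given a proper `k`-colouring, order the vertices by colour. Every edge of an increasing path
contains two colours, and all its vertices are at least the vertices of the previous edges, so the
largest colour seen grows strictly from edge to edge: there are fewer than `k` edges.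

Conversely, fix an order with no increasing simple path of length `k`, and colour `v` by the
length (capped at `k - 1`) of a longest increasing simple path whose largest vertex is `v` and
lies only in its last edge. Such a path ending at the least vertex of an edge `e` extends by `e`
to one ending at the largest vertex of `e`, so the two ends of `e` get different colours.
-/

section Pluhar

variable {α : Type*}

def IsIncreasingOn (r : α → α → Prop) (k : ℕ) (f : ℕ → Finset α) : Prop :=
  ∀ i < k, ∀ j < k, i < j → ∀ a ∈ f i, ∀ b ∈ f j, r a b

theorem exists_lt_colour_of_isIncreasingOn {r : α → α → Prop} {c : α → ℕ}
    (hc : ∀ a b, r a b → c a ≤ c b) {n : ℕ} {f : ℕ → Finset α}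
    (hf : IsIncreasingOn r n f)
    (hcol : ∀ i < n, ∃ a ∈ f i, ∃ b ∈ f i, c a ≠ c b) :
    ∀ i < n, ∃ y ∈ f i, i < c y := by
  have hlt : ∀ i < n, ∃ a ∈ f i, ∃ b ∈ f i, c a < c b := fun i hi => by
    obtain ⟨a, ha, b, hb, hab⟩ := hcol i hi
    rcases hab.lt_or_gt with h | h
    exacts [⟨a, ha, b, hb, h⟩, ⟨b, hb, a, ha, h⟩]
  intro i
  induction i with
  | zero =>
    intro h0
    obtain ⟨a, -, b, hb, hab⟩ := hlt 0 h0
    exact ⟨b, hb, by omega⟩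
  | succ i ih =>
    intro hi
    obtain ⟨y, hy, hiy⟩ := ih (by omega)
    obtain ⟨a, ha, b, hb, hab⟩ := hlt (i + 1) hi
    have hya := hc y a (hf i (by omega) (i + 1) hi (by omega) y hy a ha)
    exact ⟨b, hb, by omega⟩

theorem exists_isLinearOrder_monotone {β : Type*} [LinearOrder β] (c : α → β) :
    ∃ r : α → α → Prop, IsLinearOrder α r ∧ ∀ a b, r a b → c a ≤ c b := by
  let _ : LinearOrder α := WellOrderingRel.isWellOrder.linearOrder
  let key : α → β ×ₗ α := fun a => toLex (c a, a)
  have hkey : key.Injective := fun a b h => congrArg Prod.snd (toLex.injective h)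
  exact ⟨Function.onFun (· ≤ ·) key, hkey.isLinearOrder_onFun (· ≤ ·),
    fun a b h => Prod.Lex.monotone_fst _ _ h⟩

@[reducible]
noncomputable def IsLinearOrder.toLinearOrder (r : α → α → Prop) [IsLinearOrder α r] :
    LinearOrder α where
  le := r
  lt a b := r a b ∧ ¬ r b a
  le_refl := refl_of r
  le_trans _ _ _ := trans_of r
  le_antisymm _ _ := antisymm_of r
  le_total := total_of r
  lt_iff_le_not_ge _ _ := Iff.rfl
  toDecidableLE := Classical.decRel r

variable [DecidableEq α]

theorem IsSimplePathOn.snoc {j : ℕ} {f : ℕ → Finset α} {e : Finset α}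
    (hf : IsSimplePathOn j f) (he : 2 ≤ e.card)
    (hmeet : ∀ i, i + 1 = j → (f i ∩ e).Nonempty)
    (hfar : ∀ i, i + 2 ≤ j → f i ∩ e = ∅) (hsmall : ∀ i < j, (f i ∩ e).card ≤ 1) :
    IsSimplePathOn (j + 1) (Function.update f j e) := by
  obtain ⟨hcard, hcons, hdisj, hone⟩ := hf
  have hnew : Function.update f j e j = e := Function.update_self ..
  have hold : ∀ i < j, Function.update f j e i = f i := fun i hi =>
    Function.update_of_ne hi.ne _ _
  refine ⟨fun i hi => ?_, fun i hi => ?_, fun i hi m hm him hm' => ?_, fun i hi m hm him => ?_⟩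
  · obtain hi | rfl := Nat.lt_succ_iff_lt_or_eq.1 hi
    · rw [hold i hi]; exact hcard i hi
    · rwa [hnew]
  · obtain hi | hi := Nat.lt_succ_iff_lt_or_eq.1 hi
    · rw [hold i (by omega), hold (i + 1) hi]; exact hcons i hi
    · rw [hold i (by omega), hi, hnew]; exact hmeet i hi
  · obtain hm | rfl := Nat.lt_succ_iff_lt_or_eq.1 hm
    · rw [hold i (by omega), hold m hm]; exact hdisj i (by omega) m hm him hm'
    · rw [hold i (by omega), hnew]; exact hfar i (by omega)
  · obtain hm | rfl := Nat.lt_succ_iff_lt_or_eq.1 hm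
    · obtain hi | rfl := Nat.lt_succ_iff_lt_or_eq.1 hi
      · rw [hold i hi, hold m hm]; exact hone i hi m hm him
      · rw [hnew, hold m hm, inter_comm]; exact hsmall m hm
    · rw [hold i (by omega), hnew]; exact hsmall i (by omega)

section LinearOrder

variable [LinearOrder α]

/-- `v` is the largest vertex of the increasing path and lies only in its last edge, so that any
edge with least vertex `v` can be appended. -/
structure IsIncreasingPathTo (H : Finset (Finset α)) (j : ℕ)
    (f : ℕ → Finset α) (v : α) : Prop where
  isSimplePathOn : IsSimplePathOn j f
  mem : ∀ i < j, f i ∈ H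
  isIncreasingOn : IsIncreasingOn (· ≤ ·) j f
  mem_last : ∀ i, i + 1 = j → v ∈ f i
  le : ∀ i < j, ∀ a ∈ f i, a ≤ v
  lt : ∀ i, i + 2 ≤ j → ∀ a ∈ f i, a < v

theorem isIncreasingPathTo_zero (H : Finset (Finset α)) (f : ℕ → Finset α)
    (v : α) : IsIncreasingPathTo H 0 f v :=
  ⟨⟨nofun, nofun, nofun, nofun⟩, nofun, nofun, nofun, nofun, nofun⟩

theorem IsIncreasingPathTo.snoc {H : Finset (Finset α)} {j : ℕ}
    {f : ℕ → Finset α} {e : Finset α} {u w : α} (hf : IsIncreasingPathTo H j f u)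
    (he : e ∈ H) (hu : IsLeast (e : Set α) u) (hw : IsGreatest (e : Set α) w) (huw : u < w) :
    IsIncreasingPathTo H (j + 1) (Function.update f j e) w := by
  have hnew : Function.update f j e j = e := Function.update_self ..
  have hold : ∀ i < j, Function.update f j e i = f i := fun i hi =>
    Function.update_of_ne hi.ne _ _
  have hmeet : ∀ i < j, ∀ a ∈ f i, a ∈ e → a = u := fun i hi a ha hae =>
    le_antisymm (hf.le i hi a ha) (hu.2 hae)
  refine ⟨hf.isSimplePathOn.snoc ?_ ?_ ?_ ?_, fun i hi => ?_, fun i hi m hm him a ha b hb => ?_,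
    fun i hi => ?_, fun i hi a ha => ?_, fun i hi a ha => ?_⟩
  · exact one_lt_card.2 ⟨u, hu.1, w, hw.1, huw.ne⟩
  · exact fun i hi => ⟨u, mem_inter.2 ⟨hf.mem_last i hi, hu.1⟩⟩
  · exact fun i hi => eq_empty_of_forall_notMem fun a ha =>
      (hf.lt i hi a (mem_inter.1 ha).1).not_ge (hu.2 (mem_inter.1 ha).2)
  · refine fun i hi => card_le_one.2 fun a ha b hb => ?_
    rw [mem_inter] at ha hb
    rw [hmeet i hi a ha.1 ha.2, hmeet i hi b hb.1 hb.2]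
  · obtain hi | rfl := Nat.lt_succ_iff_lt_or_eq.1 hi
    · rw [hold i hi]; exact hf.mem i hi
    · rwa [hnew]
  · rw [hold i (by omega)] at ha
    obtain hm | rfl := Nat.lt_succ_iff_lt_or_eq.1 hm
    · rw [hold m hm] at hb; exact hf.isIncreasingOn i (by omega) m hm him a ha b hb
    · rw [hnew] at hb; exact (hf.le i him a ha).trans (hu.2 hb)
  · rw [Nat.succ_inj.1 hi, hnew]; exact hw.1
  · obtain hi | rfl := Nat.lt_succ_iff_lt_or_eq.1 hi
    · rw [hold i hi] at ha; exact (hf.le i hi a ha).trans huw.le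
    · rw [hnew] at ha; exact hw.2 ha
  · rw [hold i (by omega)] at ha; exact (hf.le i (by omega) a ha).trans_lt huw

open Classical in
noncomputable def pathRank (H : Finset (Finset α)) (n : ℕ) (v : α) : ℕ :=
  Nat.findGreatest (fun j => ∃ f, IsIncreasingPathTo H j f v) n

open Classical in
theorem pathRank_le (H : Finset (Finset α)) (n : ℕ) (v : α) :
    pathRank H n v ≤ n :=
  Nat.findGreatest_le n

open Classical in
theorem exists_isIncreasingPathTo_pathRank (H : Finset (Finset α)) (n : ℕ)
    (v : α) : ∃ f, IsIncreasingPathTo H (pathRank H n v) f v :=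
  Nat.findGreatest_spec (P := fun j => ∃ f, IsIncreasingPathTo H j f v) (Nat.zero_le n)
    ⟨fun _ => ∅, isIncreasingPathTo_zero H _ v⟩

open Classical in
theorem le_pathRank {H : Finset (Finset α)} {n j : ℕ} {f : ℕ → Finset α}
    {v : α} (hj : j ≤ n) (hf : IsIncreasingPathTo H j f v) : j ≤ pathRank H n v :=
  Nat.le_findGreatest (P := fun j => ∃ f, IsIncreasingPathTo H j f v) hj ⟨f, hf⟩

theorem pathRank_lt_pathRank {H : Finset (Finset α)} {n : ℕ}
    (hno : ¬ ∃ f, IsSimplePathOn (n + 1) f ∧ (∀ i < n + 1, f i ∈ H) ∧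
      IsIncreasingOn (· ≤ ·) (n + 1) f)
    {e : Finset α} (he : e ∈ H) {u w : α} (hu : IsLeast (e : Set α) u)
    (hw : IsGreatest (e : Set α) w) (huw : u < w) : pathRank H n u < pathRank H n w := by
  obtain ⟨f, hf⟩ := exists_isIncreasingPathTo_pathRank H n u
  have hext := hf.snoc he hu hw huw
  obtain hlt | heq := (pathRank_le H n u).lt_or_eq
  · exact le_pathRank hlt hext
  · rw [heq] at hext
    exact absurd ⟨_, hext.isSimplePathOn, hext.mem, hext.isIncreasingOn⟩ hno

theorem exists_colouring_of_not_exists_isIncreasingOn {k : ℕ} (hk : 1 ≤ k)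
    {H : Finset (Finset α)} (hH : ∀ e ∈ H, 2 ≤ e.card)
    (hno : ¬ ∃ f, IsSimplePathOn k f ∧ (∀ i < k, f i ∈ H) ∧ IsIncreasingOn (· ≤ ·) k f) :
    ∃ c : α → Fin k, ∀ e ∈ H, ∃ a ∈ e, ∃ b ∈ e, c a ≠ c b := by
  obtain ⟨n, rfl⟩ : ∃ n, k = n + 1 := ⟨k - 1, by omega⟩
  refine ⟨fun v => ⟨pathRank H n v, Nat.lt_succ_of_le (pathRank_le H n v)⟩, fun e he => ?_⟩
  have hne : e.Nonempty := card_pos.1 (by have := hH e he; omega)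
  refine ⟨e.min' hne, e.min'_mem hne, e.max' hne, e.max'_mem hne, fun hc => ?_⟩
  exact (pathRank_lt_pathRank hno he (isLeast_min' e hne) (isGreatest_max' e hne)
    (min'_lt_max'_of_card e (hH e he))).ne (congrArg Fin.val hc)

end LinearOrder

end Pluhar

theorem pluhar_colourability_general {α : Type*} [DecidableEq α] (k : ℕ)
    (hk : 1 ≤ k) (H : Finset (Finset α)) (hH : ∀ e ∈ H, 2 ≤ e.card) :
    (∃ c : α → Fin k, ∀ e ∈ H, ∃ a ∈ e, ∃ b ∈ e, c a ≠ c b) ↔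
    (∃ le : α → α → Prop, IsLinearOrder α le ∧
      ¬ ∃ f : ℕ → Finset α, IsSimplePathOn k f ∧ (∀ i < k, f i ∈ H) ∧
        ∀ i < k, ∀ j < k, i < j → ∀ a ∈ f i, ∀ b ∈ f j, le a b) := by
  constructor
  · rintro ⟨c, hc⟩
    obtain ⟨r, hr, hcr⟩ := exists_isLinearOrder_monotone c
    refine ⟨r, hr, fun ⟨f, _, hfH, hinc⟩ => ?_⟩
    have hcol : ∀ i < k, ∃ a ∈ f i, ∃ b ∈ f i, (c a : ℕ) ≠ c b := fun i hi => by
      obtain ⟨a, ha, b, hb, hab⟩ := hc (f i) (hfH i hi)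
      exact ⟨a, ha, b, hb, Fin.val_injective.ne hab⟩
    obtain ⟨y, -, hy⟩ :=
      exists_lt_colour_of_isIncreasingOn hcr hinc hcol (k - 1) (by omega)
    exact absurd (c y).isLt (by omega)
  · rintro ⟨le, hle, hno⟩
    let _ := IsLinearOrder.toLinearOrder le
    exact exists_colouring_of_not_exists_isIncreasingOn hk hH hno

/-- Pluhár's theorem: a hypergraph (all of whose edges have size at least 2) is
`k`-colourable if and only if there is a total ordering of its vertices admitting
no increasing simple path of length `k`. -/
theorem pluhar_colourability {α : Type*} [DecidableEq α] [Fintype α] (k : ℕ)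
    (hk : 1 ≤ k) (H : Finset (Finset α)) (hH : ∀ e ∈ H, 2 ≤ e.card) :
    (∃ c : α → Fin k, ∀ e ∈ H, ∃ a ∈ e, ∃ b ∈ e, c a ≠ c b) ↔
    (∃ le : α → α → Prop, IsLinearOrder α le ∧
      ¬ ∃ f : ℕ → Finset α, IsSimplePathOn k f ∧ (∀ i < k, f i ∈ H) ∧
        ∀ i < k, ∀ j < k, i < j → ∀ a ∈ f i, ∀ b ∈ f j, le a b) :=
  pluhar_colourability_general k hk H hH
end

section
/- Let r ≥ 2 be an integer and let H be an r-uniform hypergraph on n vertices with average degree d = r|E(H)|/n, and suppose d ≥ 1. Then H contains an independent set of size at least 0.5 · n / d^{1/(r−1)}. -/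
open Finset

/-! Alteration method. Let `S` contain each vertex independently with probability `p`; then
`𝔼 |S| = p n` and the expected number of edges inside `S` is `|H| p ^ r`. Deleting one vertex
from every edge inside `S` leaves an independent set, so some independent set has at least
`p n - |H| p ^ r` vertices. With `p = d ^ (-1/(r-1))` we get `|H| p ^ r = p n / r`, hence an
independent set of size `p n (1 - 1/r) ≥ p n / 2 = n / (2 d ^ (1/(r-1)))`. -/

section
variable {α : Type*}

/-- The probability that a random subset of `s`, containing each element independently with
probability `p`, equals `T`. -/
def subsetWeight (p : ℝ) (s T : Finset α) : ℝ := p ^ #T * (1 - p) ^ (#s - #T)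

variable {p : ℝ} {s : Finset α}

lemma subsetWeight_nonneg (hp₀ : 0 ≤ p) (hp₁ : p ≤ 1) (T : Finset α) :
    0 ≤ subsetWeight p s T :=
  mul_nonneg (pow_nonneg hp₀ _) (pow_nonneg (sub_nonneg.2 hp₁) _)

lemma sum_subsetWeight (p : ℝ) (s : Finset α) : ∑ T ∈ s.powerset, subsetWeight p s T = 1 := by
  simp [subsetWeight, sum_pow_mul_eq_add_pow]

variable [DecidableEq α]

lemma sum_subsetWeight_Icc {e : Finset α} (he : e ⊆ s) :
    ∑ T ∈ Icc e s, subsetWeight p s T = p ^ #e := by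
  have hinj : Set.InjOn (e ∪ ·) ((s \ e).powerset : Set (Finset α)) := by
    intro A hA B hB hAB
    rw [coe_powerset, Set.mem_preimage, Set.mem_powerset_iff, coe_subset] at hA hB
    rw [← union_sdiff_cancel_left (disjoint_of_subset_right hA disjoint_sdiff),
      ← union_sdiff_cancel_left (disjoint_of_subset_right hB disjoint_sdiff)]
    exact congrArg (· \ e) hAB
  rw [Icc_eq_image_powerset he, sum_image hinj]
  calc ∑ T ∈ (s \ e).powerset, subsetWeight p s (e ∪ T)
      = ∑ T ∈ (s \ e).powerset, p ^ #e * subsetWeight p (s \ e) T := by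
        refine sum_congr rfl fun T hT => ?_
        have hT : T ⊆ s \ e := mem_powerset.1 hT
        rw [subsetWeight, subsetWeight,
          card_union_of_disjoint (disjoint_of_subset_right hT disjoint_sdiff),
          card_sdiff_of_subset he, Nat.sub_add_eq, pow_add, mul_assoc]
    _ = p ^ #e := by rw [← mul_sum, sum_subsetWeight, mul_one]

lemma sum_subsetWeight_mul_card_filter_subset {ι : Type*} (I : Finset ι) (E : ι → Finset α)
    (hE : ∀ i ∈ I, E i ⊆ s) :
    ∑ T ∈ s.powerset, subsetWeight p s T * #{i ∈ I | E i ⊆ T} = ∑ i ∈ I, p ^ #(E i) :=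
  calc ∑ T ∈ s.powerset, subsetWeight p s T * #{i ∈ I | E i ⊆ T}
      = ∑ i ∈ I, ∑ T ∈ s.powerset, if E i ⊆ T then subsetWeight p s T else 0 := by
        rw [sum_comm]
        refine sum_congr rfl fun T _ => ?_
        rw [← sum_filter, sum_const, nsmul_eq_mul, mul_comm]
    _ = ∑ i ∈ I, p ^ #(E i) := by
        refine sum_congr rfl fun i hi => ?_
        rw [← sum_filter, ← Icc_eq_filter_powerset, sum_subsetWeight_Icc (hE i hi)]

end

lemma exists_le_of_le_sum_mul {ι : Type*} {s : Finset ι} {w f : ι → ℝ} {c : ℝ}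
    (hw₀ : ∀ i ∈ s, 0 ≤ w i) (hw₁ : ∑ i ∈ s, w i = 1) (h : c ≤ ∑ i ∈ s, w i * f i) :
    ∃ i ∈ s, c ≤ f i := by
  have hsum : 0 < ∑ i ∈ s, w i := hw₁ ▸ one_pos
  obtain ⟨i, hi, hmax⟩ := exists_mem_eq_sup' (nonempty_of_sum_ne_zero hsum.ne') f
  refine ⟨i, hi, ?_⟩
  calc c ≤ s.centerMass w f := by rwa [centerMass_eq_of_sum_1 _ _ hw₁]
    _ ≤ _ := centerMass_le_sup hw₀ hsum
    _ = f i := hmax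

section
variable {α : Type*} [DecidableEq α]

lemma exists_indepIn_subset_card_le_add {H : Finset (Finset α)} (hH : ∀ e ∈ H, e.Nonempty)
    (S : Finset α) :
    ∃ X ⊆ S, IndepIn (↑H : Set (Finset α)) X ∧ #S ≤ #X + #{e ∈ H | e ⊆ S} := by
  obtain rfl | ⟨v, -⟩ := S.eq_empty_or_nonempty
  · exact ⟨∅, subset_rfl, fun e he h => (hH e he).ne_empty (subset_empty.1 h), by simp⟩
  have : Nonempty α := ⟨v⟩
  choose! pick hpick using hH
  refine ⟨S \ {e ∈ H | e ⊆ S}.image pick, sdiff_subset, fun e he heX => ?_, ?_⟩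
  · have heS : e ⊆ S := heX.trans sdiff_subset
    exact (mem_sdiff.1 (heX (hpick e he))).2 (mem_image_of_mem pick (mem_filter.2 ⟨he, heS⟩))
  · exact card_le_card_sdiff_add_card.trans (Nat.add_le_add_left card_image_le _)

lemma exists_indepIn_card_ge [Fintype α] {r : ℕ} (hr : 0 < r) {H : Finset (Finset α)}
    (hH : ∀ e ∈ H, #e = r) {p : ℝ} (hp₀ : 0 ≤ p) (hp₁ : p ≤ 1) :
    ∃ X : Finset α, IndepIn (↑H : Set (Finset α)) X ∧
      p * (Fintype.card α : ℝ) - #H * p ^ r ≤ #X := by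
  have hvertices :
      ∑ T ∈ (univ : Finset α).powerset, subsetWeight p univ T * #T = p * Fintype.card α := by
    simpa [mul_comm] using sum_subsetWeight_mul_card_filter_subset (p := p) (s := univ) univ
      (fun v : α => {v}) (by simp)
  have hedges :
      ∑ T ∈ univ.powerset, subsetWeight p univ T * #{e ∈ H | e ⊆ T} = #H * p ^ r := by
    rw [sum_subsetWeight_mul_card_filter_subset (s := univ) H (fun e => e) (by simp),
      sum_congr rfl fun e he => congrArg (p ^ ·) (hH e he), sum_const, nsmul_eq_mul]
  have hmean : ∑ T ∈ univ.powerset, subsetWeight p univ T * ((#T : ℝ) - #{e ∈ H | e ⊆ T}) =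
      p * Fintype.card α - #H * p ^ r := by
    simp only [mul_sub, sum_sub_distrib, hvertices, hedges]
  obtain ⟨S, -, hS⟩ := exists_le_of_le_sum_mul (fun T _ => subsetWeight_nonneg hp₀ hp₁ T)
    (sum_subsetWeight p univ) hmean.ge
  obtain ⟨X, -, hX, hcard⟩ :=
    exists_indepIn_subset_card_le_add (fun e he => card_pos.1 (hH e he ▸ hr)) S
  refine ⟨X, hX, hS.trans ?_⟩
  rw [sub_le_iff_le_add]
  exact_mod_cast hcard

end

lemma rpow_neg_one_div_sub_one_pow_sub_one {d : ℝ} (hd : 0 ≤ d) {r : ℕ} (hr : 2 ≤ r) :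
    (d ^ (-((1 : ℝ) / (r - 1)))) ^ (r - 1) = d⁻¹ := by
  rw [one_div, ← Nat.cast_one, ← Nat.cast_sub (by omega), Real.rpow_neg hd, inv_pow,
    Real.rpow_inv_natCast_pow hd (by omega)]

/-- Spencer's bound: an `r`-uniform hypergraph on `n` vertices with average degree
`d ≥ 1` has an independent set of size at least `0.5 * n / d^(1/(r-1))`. -/
theorem spencer_independence {α : Type*} [DecidableEq α] [Fintype α] (r : ℕ)
    (hr : 2 ≤ r) (H : Finset (Finset α)) (hH : ∀ e ∈ H, e.card = r)
    (hd : 1 ≤ ((r : ℝ) * (H.card : ℝ) / (Fintype.card α : ℝ))) :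
    ∃ X : Finset α, IndepIn (↑H : Set (Finset α)) X ∧
      0.5 * (Fintype.card α : ℝ) /
        ((r : ℝ) * (H.card : ℝ) / (Fintype.card α : ℝ)) ^ ((1 : ℝ) / ((r : ℝ) - 1))
        ≤ (X.card : ℝ) := by
  have hn : (0 : ℝ) < Fintype.card α := (Nat.cast_nonneg _).lt_of_ne fun h => by
    rw [← h, div_zero] at hd; norm_num at hd
  generalize hd_def : (r : ℝ) * #H / Fintype.card α = d at hd ⊢
  have hd₀ : 0 < d := one_pos.trans_le hd
  have hH_card : (#H : ℝ) = d * Fintype.card α / r := by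
    rw [← hd_def]; field_simp
  have hp_pow := rpow_neg_one_div_sub_one_pow_sub_one hd₀.le hr
  have hroot : d ^ ((1 : ℝ) / (r - 1)) = (d ^ (-((1 : ℝ) / (r - 1))))⁻¹ := by
    rw [Real.rpow_neg hd₀.le, inv_inv]
  have hp₁ : d ^ (-((1 : ℝ) / (r - 1))) ≤ 1 :=
    Real.rpow_le_one_of_one_le_of_nonpos hd
      (neg_nonpos.2 (one_div_nonneg.2 (sub_nonneg.2 (by exact_mod_cast one_le_two.trans hr))))
  set p := d ^ (-((1 : ℝ) / (r - 1)))
  have hp₀ : 0 < p := Real.rpow_pos_of_pos hd₀ _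
  have hedges : (#H : ℝ) * p ^ r = p * Fintype.card α / r := by
    rw [hH_card, ← pow_sub_one_mul (by omega : r ≠ 0), hp_pow]
    field_simp
  have hr_half : p * Fintype.card α / r ≤ p * Fintype.card α / 2 :=
    div_le_div_of_nonneg_left (by positivity) two_pos (by exact_mod_cast hr)
  obtain ⟨X, hX, hcard⟩ := exists_indepIn_card_ge (by omega) hH hp₀.le hp₁
  refine ⟨X, hX, ?_⟩
  calc 0.5 * (Fintype.card α : ℝ) / d ^ ((1 : ℝ) / (r - 1)) = p * Fintype.card α / 2 := by
        rw [hroot, div_inv_eq_mul]; ring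
    _ ≤ p * Fintype.card α - #H * p ^ r := by linarith
    _ ≤ #X := hcard
end

section
/- Let r ≥ 2 and l ≥ 3 be integers and let H be a simple hypergraph all of whose edges have size between 2 and r, with average degree d. Then there exists a pair (X,Y) of disjoint subsets of V(H) with |X| ≥ d/r and |Y| ≤ (r−1)|X| such that for all distinct u,v ∈ X and every S ⊆ V(H)∖({u,v} ∪ Y) with |S| ≤ 2l−5, there is a simple path of length two in H joining u to v and containing no vertex of S. -/
open Finset

/-!
Take a vertex `w` of maximum degree, so that `deg w` is at least the average degree `d`. In each
edge `e` through `w` pick a vertex `x e ≠ w`; since `e` is the only edge through both `w` and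
`x e`, the chosen vertices are distinct and lie in no other edge through `w`. Then
`X = {x e}` has `|X| = deg w ≥ d` and, with `Y` the remaining vertices of these edges,
`|Y| ≤ (r - 1)|X|`. Two vertices `x e ≠ x f` of `X` are joined by the path `e, f` through `w`,
and a set `S` avoiding `{x e, x f} ∪ Y` avoids both edges.
-/

section Hypergraph

variable {α : Type*} [DecidableEq α]

theorem exists_average_le_degree [Fintype α] [Nonempty α] (H : Finset (Finset α)) :
    ∃ w : α, (∑ e ∈ H, (e.card : ℝ)) / Fintype.card α ≤ #{e ∈ H | w ∈ e} := by
  obtain ⟨w, -, hw⟩ := exists_max_image univ (fun v => #{e ∈ H | v ∈ e}) univ_nonempty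
  refine ⟨w, div_le_of_le_mul₀ (by positivity) (by positivity) ?_⟩
  rw [mul_comm]
  exact_mod_cast sum_card_le fun v => hw v (mem_univ v)

theorem simplePathJoins_two {e f : Finset α} {u v : α} (he : 2 ≤ e.card) (hf : 2 ≤ f.card)
    (hef : (e ∩ f).Nonempty) (hsimple : (e ∩ f).card ≤ 1)
    (hue : u ∈ e) (huf : u ∉ f) (hvf : v ∈ f) (hve : v ∉ e) :
    SimplePathJoins 2 (fun n => if n = 0 then e else f) u v := by
  refine ⟨⟨?_, ?_, by omega, ?_⟩, by simpa, by simpa, fun _ => ⟨by simpa, by simpa⟩⟩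
  · intro i hi
    interval_cases i <;> simpa
  · intro i hi
    obtain rfl : i = 0 := by omega
    simpa
  · intro i hi j hj hij
    interval_cases i <;> interval_cases j <;> simp_all [inter_comm]

theorem subset_insert_biUnion_erase {F : Finset (Finset α)} (x : Finset α → α) {e : Finset α}
    (he : e ∈ F) : e ⊆ insert (x e) (F.biUnion fun g => g.erase (x g)) := fun y hy => by
  by_cases hyx : y = x e
  · exact hyx ▸ mem_insert_self _ _
  · exact mem_insert_of_mem (mem_biUnion.2 ⟨e, he, mem_erase.2 ⟨hyx, hy⟩⟩)

def IsPrivateVertexMap (F : Finset (Finset α)) (x : Finset α → α) : Prop :=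
  ∀ e ∈ F, x e ∈ e ∧ ∀ g ∈ F, x e ∈ g → e = g

namespace IsPrivateVertexMap

variable {F : Finset (Finset α)} {x : Finset α → α}

theorem card_image (hx : IsPrivateVertexMap F x) : #(F.image x) = #F :=
  card_image_of_injOn fun e he g hg hxeg => (hx e he).2 g hg (hxeg ▸ (hx g hg).1)

theorem disjoint_image_biUnion_erase (hx : IsPrivateVertexMap F x) :
    Disjoint (F.image x) (F.biUnion fun e => e.erase (x e)) := by
  refine disjoint_left.2 fun y hy hyY => ?_
  obtain ⟨g, hg, rfl⟩ := mem_image.1 hy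
  obtain ⟨e, he, hxg⟩ := mem_biUnion.1 hyY
  rw [mem_erase] at hxg
  exact hxg.1 (by rw [(hx g hg).2 e he hxg.2])

theorem simplePathJoins (hx : IsPrivateVertexMap F x) {e f : Finset α} (he : e ∈ F) (hf : f ∈ F)
    (hxef : x e ≠ x f) (he2 : 2 ≤ e.card) (hf2 : 2 ≤ f.card) (hef : (e ∩ f).Nonempty)
    (hsimple : (e ∩ f).card ≤ 1) :
    SimplePathJoins 2 (fun n => if n = 0 then e else f) (x e) (x f) := by
  have hne : e ≠ f := fun h => hxef (h ▸ rfl)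
  exact simplePathJoins_two he2 hf2 hef hsimple (hx e he).1 (fun h => hne ((hx e he).2 f hf h))
    (hx f hf).1 (fun h => hne ((hx f hf).2 e he h).symm)

end IsPrivateVertexMap

variable {H : Finset (Finset α)}

theorem eq_of_mem_inter_of_ne (hsimple : ∀ e ∈ H, ∀ f ∈ H, e ≠ f → (e ∩ f).card ≤ 1)
    {e f : Finset α} (he : e ∈ H) (hf : f ∈ H) {a b : α} (ha : a ∈ e ∩ f) (hb : b ∈ e ∩ f)
    (hab : a ≠ b) : e = f := by
  by_contra hne
  exact hab (card_le_one.1 (hsimple e he f hf hne) a ha b hb)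

/-- Any vertex other than `w` is private in an edge through `w`, by simplicity. -/
theorem exists_isPrivateVertexMap (hH : ∀ e ∈ H, 2 ≤ e.card)
    (hsimple : ∀ e ∈ H, ∀ f ∈ H, e ≠ f → (e ∩ f).card ≤ 1) (w : α) :
    ∃ x : Finset α → α, IsPrivateVertexMap {e ∈ H | w ∈ e} x := by
  have hchoice : ∀ e ∈ {e ∈ H | w ∈ e}, ∃ y ∈ e, y ≠ w := fun e he =>
    exists_mem_ne (hH e (mem_filter.1 he).1) w
  have : Nonempty α := ⟨w⟩
  choose! x hxe hxw using hchoice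
  refine ⟨x, fun e he => ⟨hxe e he, fun g hg hxg => ?_⟩⟩
  rw [mem_filter] at he hg
  exact eq_of_mem_inter_of_ne hsimple he.1 hg.1 (mem_inter.2 ⟨hxe e (mem_filter.2 he), hxg⟩)
    (mem_inter.2 ⟨he.2, hg.2⟩) (hxw e (mem_filter.2 he))

theorem exists_extender_of_degree {r : ℕ} (hH : ∀ e ∈ H, 2 ≤ e.card ∧ e.card ≤ r)
    (hsimple : ∀ e ∈ H, ∀ f ∈ H, e ≠ f → (e ∩ f).card ≤ 1) (w : α) :
    ∃ X Y : Finset α, Disjoint X Y ∧ X.card = #{e ∈ H | w ∈ e} ∧ Y.card ≤ (r - 1) * X.card ∧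
      ∀ u ∈ X, ∀ v ∈ X, u ≠ v → ∀ S : Finset α, Disjoint S ({u, v} ∪ Y) →
        ∃ f : ℕ → Finset α, SimplePathJoins 2 f u v ∧ (∀ i < 2, f i ∈ H) ∧
          ∀ i < 2, Disjoint (f i) S := by
  obtain ⟨x, hx⟩ := exists_isPrivateVertexMap (fun e he => (hH e he).1) hsimple w
  set F := {e ∈ H | w ∈ e}
  have hmem : ∀ e ∈ F, e ∈ H ∧ w ∈ e := fun e he => mem_filter.1 he
  refine ⟨F.image x, F.biUnion fun e => e.erase (x e), hx.disjoint_image_biUnion_erase,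
    hx.card_image, ?_, ?_⟩
  · rw [hx.card_image, mul_comm]
    refine card_biUnion_le_card_mul _ _ _ fun e he => ?_
    rw [card_erase_of_mem (hx e he).1]
    exact Nat.sub_le_sub_right (hH e (hmem e he).1).2 1
  · rintro _ hu _ hv huv S hS
    obtain ⟨e, he, rfl⟩ := mem_image.1 hu
    obtain ⟨f, hf, rfl⟩ := mem_image.1 hv
    have hne : e ≠ f := fun h => huv (h ▸ rfl)
    have havoid : ∀ g ∈ F, x g ∈ ({x e, x f} : Finset α) → Disjoint g S := fun g hg hxg =>
      (hS.mono_right ((subset_insert_biUnion_erase x hg).trans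
        (insert_subset (mem_union_left _ hxg) subset_union_right))).symm
    refine ⟨_, hx.simplePathJoins he hf huv (hH e (hmem e he).1).1 (hH f (hmem f hf).1).1
      ⟨w, mem_inter.2 ⟨(hmem e he).2, (hmem f hf).2⟩⟩ (hsimple e (hmem e he).1 f (hmem f hf).1 hne),
      ?_, ?_⟩ <;> intro i hi <;> interval_cases i
    · exact (hmem e he).1
    · exact (hmem f hf).1
    · exact havoid e he (by simp)
    · exact havoid f hf (by simp)

end Hypergraph

theorem simple_graph_extender_general {α : Type*} [DecidableEq α] [Fintype α] (r l : ℕ)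
    (hr : 2 ≤ r)
    (H : Finset (Finset α)) (hH : ∀ e ∈ H, 2 ≤ e.card ∧ e.card ≤ r)
    (hsimple : ∀ e ∈ H, ∀ f ∈ H, e ≠ f → (e ∩ f).card ≤ 1) :
    ∃ X Y : Finset α, Disjoint X Y ∧
      ((∑ e ∈ H, (e.card : ℝ)) / (Fintype.card α : ℝ)) / (r : ℝ) ≤ (X.card : ℝ) ∧
      Y.card ≤ (r - 1) * X.card ∧
      ∀ u ∈ X, ∀ v ∈ X, u ≠ v → ∀ S : Finset α,
        Disjoint S ({u, v} ∪ Y) → S.card ≤ 2 * l - 5 →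
          ∃ f : ℕ → Finset α, SimplePathJoins 2 f u v ∧ (∀ i < 2, f i ∈ H) ∧
            ∀ i < 2, Disjoint (f i) S := by
  rcases isEmpty_or_nonempty α with hα | hα
  · exact ⟨∅, ∅, by simp, by simp, by simp, by simp⟩
  obtain ⟨w, hw⟩ := exists_average_le_degree H
  obtain ⟨X, Y, hXY, hX, hY, hpath⟩ := exists_extender_of_degree hH hsimple w
  refine ⟨X, Y, hXY, ?_, hY, fun u hu v hv huv S hS _ => hpath u hu v hv huv S hS⟩
  calc (∑ e ∈ H, (e.card : ℝ)) / Fintype.card α / r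
      ≤ (∑ e ∈ H, (e.card : ℝ)) / Fintype.card α :=
        div_le_self (by positivity) (by exact_mod_cast hr.trans' one_le_two)
    _ ≤ X.card := hX ▸ hw

/-- In a simple `[2,r]`-graph of average degree `d` there is an extender `(X, Y)`
(in the `[2,r]`-graph sense: `|Y| ≤ (r-1)|X|`) with `|X| ≥ d / r`. -/
theorem simple_graph_extender {α : Type*} [DecidableEq α] [Fintype α] (r l : ℕ)
    (hr : 2 ≤ r) (hl : 3 ≤ l)
    (H : Finset (Finset α)) (hH : ∀ e ∈ H, 2 ≤ e.card ∧ e.card ≤ r)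
    (hsimple : ∀ e ∈ H, ∀ f ∈ H, e ≠ f → (e ∩ f).card ≤ 1) :
    ∃ X Y : Finset α, Disjoint X Y ∧
      ((∑ e ∈ H, (e.card : ℝ)) / (Fintype.card α : ℝ)) / (r : ℝ) ≤ (X.card : ℝ) ∧
      Y.card ≤ (r - 1) * X.card ∧
      ∀ u ∈ X, ∀ v ∈ X, u ≠ v → ∀ S : Finset α,
        Disjoint S ({u, v} ∪ Y) → S.card ≤ 2 * l - 5 →
          ∃ f : ℕ → Finset α, SimplePathJoins 2 f u v ∧ (∀ i < 2, f i ∈ H) ∧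
            ∀ i < 2, Disjoint (f i) S :=
  simple_graph_extender_general r l hr H hH hsimple
end
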